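/- If a term t in the λ_em-calculus is in normal form (no intuitionistic reduction, permutation, activation, or cross reduction applies), then t is in parallel form: removing parentheses, t can be written as t₁ ∥_{a₁} t₂ ∥_{a₂} ⋯ ∥_{aₙ} t_{n+1} where each tᵢ is a simply typed λ-term containing no parallel operator. -/
import Mathlib


/-- Terms of the λ_em-calculus: the simply typed λ-calculus (with named variables,
pairs, projections, injections, case distinctions and ex falso) extended with
channel endpoints `ch a`, channel outputs `chOut a t` (i.e. `ā t`), and the
parallel operator `par a u v` (i.e. `u ∥ₐ v`), which binds the channel `a`. -/
inductive Tm : Type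
  | var : ℕ → Tm
  | lam : ℕ → Tm → Tm
  | app : Tm → Tm → Tm
  | pair : Tm → Tm → Tm
  | proj : Bool → Tm → Tm
  | inl : Tm → Tm
  | inr : Tm → Tm
  | case : Tm → ℕ → Tm → ℕ → Tm → Tm
  | efq : Tm → Tm
  | ch : ℕ → Tm
  | chOut : ℕ → Tm → Tm
  | par : ℕ → Tm → Tm → Tm

/-- The fixed partition of channel names into active and inactive channels. -/
def Active (a : ℕ) : Prop := a % 2 = 1

/-- Substitution of `s` for the intuitionistic variable `x`. -/
def substV (x : ℕ) (s : Tm) : Tm → Tm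
  | .var y => if y = x then s else .var y
  | .lam y t => if y = x then .lam y t else .lam y (substV x s t)
  | .app t u => .app (substV x s t) (substV x s u)
  | .pair t u => .pair (substV x s t) (substV x s u)
  | .proj b t => .proj b (substV x s t)
  | .inl t => .inl (substV x s t)
  | .inr t => .inr (substV x s t)
  | .case t y u z v =>
      .case (substV x s t) y (if y = x then u else substV x s u) z
        (if z = x then v else substV x s v)
  | .efq t => .efq (substV x s t)
  | .ch a => .ch a
  | .chOut a t => .chOut a (substV x s t)
  | .par a t u => .par a (substV x s t) (substV x s u)

/-- Substitution of `s` for the (endpoint occurrences of the) channel `a`. -/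
def substCh (a : ℕ) (s : Tm) : Tm → Tm
  | .var y => .var y
  | .lam y t => .lam y (substCh a s t)
  | .app t u => .app (substCh a s t) (substCh a s u)
  | .pair t u => .pair (substCh a s t) (substCh a s u)
  | .proj b t => .proj b (substCh a s t)
  | .inl t => .inl (substCh a s t)
  | .inr t => .inr (substCh a s t)
  | .case t y u z v => .case (substCh a s t) y (substCh a s u) z (substCh a s v)
  | .efq t => .efq (substCh a s t)
  | .ch b => if b = a then s else .ch b
  | .chOut b t => .chOut b (substCh a s t)
  | .par b t u => if b = a then .par b t u else .par b (substCh a s t) (substCh a s u)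

/-- Renaming of the free channel `a` to `b`. -/
def renameCh (a b : ℕ) : Tm → Tm
  | .var y => .var y
  | .lam y t => .lam y (renameCh a b t)
  | .app t u => .app (renameCh a b t) (renameCh a b u)
  | .pair t u => .pair (renameCh a b t) (renameCh a b u)
  | .proj c t => .proj c (renameCh a b t)
  | .inl t => .inl (renameCh a b t)
  | .inr t => .inr (renameCh a b t)
  | .case t y u z v => .case (renameCh a b t) y (renameCh a b u) z (renameCh a b v)
  | .efq t => .efq (renameCh a b t)
  | .ch c => .ch (if c = a then b else c)
  | .chOut c t => .chOut (if c = a then b else c) (renameCh a b t)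
  | .par c t u =>
      if c = a then .par c t u else .par c (renameCh a b t) (renameCh a b u)

/-- The channel `a` occurs free in the term. -/
def OccCh (a : ℕ) : Tm → Prop
  | .var _ => False
  | .lam _ t => OccCh a t
  | .app t u => OccCh a t ∨ OccCh a u
  | .pair t u => OccCh a t ∨ OccCh a u
  | .proj _ t => OccCh a t
  | .inl t => OccCh a t
  | .inr t => OccCh a t
  | .case t _ u _ v => OccCh a t ∨ OccCh a u ∨ OccCh a v
  | .efq t => OccCh a t
  | .ch b => b = a
  | .chOut b t => b = a ∨ OccCh a t
  | .par b t u => b ≠ a ∧ (OccCh a t ∨ OccCh a u)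

/-- Free intuitionistic variables of a term. -/
def fv : Tm → List ℕ
  | .var n => [n]
  | .lam x t => (fv t).filter (· ≠ x)
  | .app t u => fv t ++ fv u
  | .pair t u => fv t ++ fv u
  | .proj _ t => fv t
  | .inl t => fv t
  | .inr t => fv t
  | .case t x u y v => fv t ++ (fv u).filter (· ≠ x) ++ (fv v).filter (· ≠ y)
  | .efq t => fv t
  | .ch _ => []
  | .chOut _ t => fv t
  | .par _ t u => fv t ++ fv u

/-- The head of the term is an active channel applied to a stack. -/
def ActiveChanHead : Tm → Prop
  | .ch a => Active a
  | .app t _ => ActiveChanHead t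
  | .proj _ t => ActiveChanHead t
  | .case t _ _ _ _ => ActiveChanHead t
  | .efq t => ActiveChanHead t
  | _ => False

/-- Values: tuples one of whose components is an abstraction, an injection, a case
distinction, an ex falso, or an active channel applied to a stack. -/
def IsValue : Tm → Prop
  | .pair u v => IsValue u ∨ IsValue v
  | .lam _ _ => True
  | .inl _ => True
  | .inr _ => True
  | .case _ _ _ _ _ => True
  | .efq _ => True
  | t => ActiveChanHead t

/-- Some free occurrence of the channel `a` is applied to a value. -/
def AppliedToValue (a : ℕ) : Tm → Prop
  | .var _ => False
  | .lam _ t => AppliedToValue a t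
  | .app t u => (t = .ch a ∧ IsValue u) ∨ AppliedToValue a t ∨ AppliedToValue a u
  | .pair t u => AppliedToValue a t ∨ AppliedToValue a u
  | .proj _ t => AppliedToValue a t
  | .inl t => AppliedToValue a t
  | .inr t => AppliedToValue a t
  | .case t _ u _ v => AppliedToValue a t ∨ AppliedToValue a u ∨ AppliedToValue a v
  | .efq t => AppliedToValue a t
  | .ch _ => False
  | .chOut b t => (b = a ∧ IsValue t) ∨ AppliedToValue a t
  | .par b t u => b ≠ a ∧ (AppliedToValue a t ∨ AppliedToValue a u)

/-- The term is a simply typed λ-term: it contains no parallel operator. -/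
def NoPar : Tm → Prop
  | .var _ => True
  | .lam _ t => NoPar t
  | .app t u => NoPar t ∧ NoPar u
  | .pair t u => NoPar t ∧ NoPar u
  | .proj _ t => NoPar t
  | .inl t => NoPar t
  | .inr t => NoPar t
  | .case t _ u _ v => NoPar t ∧ NoPar u ∧ NoPar v
  | .efq t => NoPar t
  | .ch _ => True
  | .chOut _ t => NoPar t
  | .par _ _ _ => False

/-- The term contains no active session, i.e. no subterm `u ∥ₐ v` with `a` active. -/
def NoActiveSession : Tm → Prop
  | .var _ => True
  | .lam _ t => NoActiveSession t
  | .app t u => NoActiveSession t ∧ NoActiveSession u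
  | .pair t u => NoActiveSession t ∧ NoActiveSession u
  | .proj _ t => NoActiveSession t
  | .inl t => NoActiveSession t
  | .inr t => NoActiveSession t
  | .case t _ u _ v => NoActiveSession t ∧ NoActiveSession u ∧ NoActiveSession v
  | .efq t => NoActiveSession t
  | .ch _ => True
  | .chOut _ t => NoActiveSession t
  | .par a t u => ¬ Active a ∧ NoActiveSession t ∧ NoActiveSession u

/-- `HasSub s t`: `s` occurs as a subterm of `t`. -/
def HasSub (s : Tm) : Tm → Prop
  | .var n => Tm.var n = s
  | .lam x t => Tm.lam x t = s ∨ HasSub s t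
  | .app t u => Tm.app t u = s ∨ HasSub s t ∨ HasSub s u
  | .pair t u => Tm.pair t u = s ∨ HasSub s t ∨ HasSub s u
  | .proj b t => Tm.proj b t = s ∨ HasSub s t
  | .inl t => Tm.inl t = s ∨ HasSub s t
  | .inr t => Tm.inr t = s ∨ HasSub s t
  | .case t x u y v => Tm.case t x u y v = s ∨ HasSub s t ∨ HasSub s u ∨ HasSub s v
  | .efq t => Tm.efq t = s ∨ HasSub s t
  | .ch a => Tm.ch a = s
  | .chOut a t => Tm.chOut a t = s ∨ HasSub s t
  | .par a t u => Tm.par a t u = s ∨ HasSub s t ∨ HasSub s u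

/-- One-step reduction of λ_em: intuitionistic reductions, disjunction
permutations, parallel operator permutations, activation reductions and cross
reductions, applied at any position in a term. -/
inductive Step : Tm → Tm → Prop
  -- intuitionistic reductions
  | beta {x t u} : Step (.app (.lam x t) u) (substV x u t)
  | projL {u v} : Step (.proj false (.pair u v)) u
  | projR {u v} : Step (.proj true (.pair u v)) v
  | caseL {t x u y v} : Step (.case (.inl t) x u y v) (substV x t u)
  | caseR {t x u y v} : Step (.case (.inr t) x u y v) (substV y t v)
  -- disjunction permutations
  | permCaseApp {t x u y v w} :
      Step (.app (.case t x u y v) w) (.case t x (.app u w) y (.app v w))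
  | permCaseProj {b t x u y v} :
      Step (.proj b (.case t x u y v)) (.case t x (.proj b u) y (.proj b v))
  | permCaseCase {t x u y v p a q b} :
      Step (.case (.case t x u y v) p a q b)
        (.case t x (.case u p a q b) y (.case v p a q b))
  | permCaseEfq {t x u y v} :
      Step (.efq (.case t x u y v)) (.case t x (.efq u) y (.efq v))
  -- parallel operator permutations
  | permParAppL {a u v w} :
      Step (.app w (.par a u v)) (.par a (.app w u) (.app w v))
  | permParAppR {a u v w} :
      Step (.app (.par a u v) w) (.par a (.app u w) (.app v w))
  | permParProj {b a u v} :
      Step (.proj b (.par a u v)) (.par a (.proj b u) (.proj b v))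
  | permParCase {a u v x p y q} :
      Step (.case (.par a u v) x p y q) (.par a (.case u x p y q) (.case v x p y q))
  | permParCaseBrL {t x a u v y w} :
      Step (.case t x (.par a u v) y w) (.par a (.case t x u y w) (.case t x v y w))
  | permParCaseBrR {t x w y a u v} :
      Step (.case t x w y (.par a u v)) (.par a (.case t x w y u) (.case t x w y v))
  | permParEfq {a u v} : Step (.efq (.par a u v)) (.par a (.efq u) (.efq v))
  | permParLam {x a u v} : Step (.lam x (.par a u v)) (.par a (.lam x u) (.lam x v))
  | permParInl {a u v} : Step (.inl (.par a u v)) (.par a (.inl u) (.inl v))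
  | permParInr {a u v} : Step (.inr (.par a u v)) (.par a (.inr u) (.inr v))
  | permParPairL {a u v w} :
      Step (.pair (.par a u v) w) (.par a (.pair u w) (.pair v w))
  | permParPairR {a u v w} :
      Step (.pair w (.par a u v)) (.par a (.pair w u) (.pair w v))
  | permParChOut {c a u v} :
      Step (.chOut c (.par a u v)) (.par a (.chOut c u) (.chOut c v))
  | permParPar₁ {a b u v w} : NoActiveSession u → NoActiveSession v →
      NoActiveSession w →
      Step (.par b (.par a u v) w) (.par a (.par b u w) (.par b v w))
  | permParPar₂ {a b u v w} : NoActiveSession u → NoActiveSession v →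
      NoActiveSession w →
      Step (.par b w (.par a u v)) (.par a (.par b w u) (.par b w v))
  -- activation reduction
  | activate {a b u v} : ¬ Active a → Active b → ¬ OccCh b u → ¬ OccCh b v →
      (AppliedToValue a u ∨ AppliedToValue a v) →
      Step (.par a u v) (.par b (renameCh a b u) (renameCh a b v))
  -- basic cross reduction
  | crossBasic {a u l r} : Active a → NoPar l → NoPar r →
      HasSub (.chOut a u) l → fv u = [] →
      Step (.par a l r) (substCh a u r)
  -- cross reductions (discarding an unused side)
  | crossDropL {a u v} : ¬ OccCh a u → Step (.par a u v) u
  | crossDropR {a u v} : ¬ OccCh a v → Step (.par a u v) v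
  -- congruence: reductions apply at any position
  | congLam {x t t'} : Step t t' → Step (.lam x t) (.lam x t')
  | congAppL {t t' u} : Step t t' → Step (.app t u) (.app t' u)
  | congAppR {t u u'} : Step u u' → Step (.app t u) (.app t u')
  | congPairL {t t' u} : Step t t' → Step (.pair t u) (.pair t' u)
  | congPairR {t u u'} : Step u u' → Step (.pair t u) (.pair t u')
  | congProj {b t t'} : Step t t' → Step (.proj b t) (.proj b t')
  | congInl {t t'} : Step t t' → Step (.inl t) (.inl t')
  | congInr {t t'} : Step t t' → Step (.inr t) (.inr t')
  | congCase₀ {t t' x u y v} : Step t t' → Step (.case t x u y v) (.case t' x u y v)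
  | congCase₁ {t x u u' y v} : Step u u' → Step (.case t x u y v) (.case t x u' y v)
  | congCase₂ {t x u y v v'} : Step v v' → Step (.case t x u y v) (.case t x u y v')
  | congEfq {t t'} : Step t t' → Step (.efq t) (.efq t')
  | congChOut {a t t'} : Step t t' → Step (.chOut a t) (.chOut a t')
  | congParL {a u u' v} : Step u u' → Step (.par a u v) (.par a u' v)
  | congParR {a u v v'} : Step v v' → Step (.par a u v) (.par a u v')

/-- A term is in normal form when no reduction rule of the calculus applies
anywhere in it. -/
def NormalForm (t : Tm) : Prop := ∀ u, ¬ Step t u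

/-- Parallel forms: parallel compositions of simply typed λ-terms. -/
inductive ParallelForm : Tm → Prop
  | base {t} : NoPar t → ParallelForm t
  | node {a u v} : ParallelForm u → ParallelForm v → ParallelForm (.par a u v)

/-- Every λ_em-term in normal form is in parallel form: removing parentheses, it
can be written as `t₁ ∥_{a₁} t₂ ∥_{a₂} ⋯ ∥_{aₙ} t_{n+1}` where each `tᵢ` is a
simply typed λ-term. -/
theorem normal_form_is_parallel_form (t : Tm) (h : NormalForm t) : ParallelForm t := by
  induction t with
  | var n => exact .base trivial
  | ch a => exact .base trivial
  | lam x t ih =>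
    rcases ih (fun u hu => h _ (.congLam hu)) with ⟨hnp⟩ | ⟨_, _⟩
    · exact .base hnp
    · exact absurd Step.permParLam (h _)
  | app t u iht ihu =>
    rcases iht (fun w hw => h _ (.congAppL hw)) with ⟨hnt⟩ | ⟨_, _⟩
    · rcases ihu (fun w hw => h _ (.congAppR hw)) with ⟨hnu⟩ | ⟨_, _⟩
      · exact .base ⟨hnt, hnu⟩
      · exact absurd Step.permParAppL (h _)
    · exact absurd Step.permParAppR (h _)
  | pair t u iht ihu =>
    rcases iht (fun w hw => h _ (.congPairL hw)) with ⟨hnt⟩ | ⟨_, _⟩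
    · rcases ihu (fun w hw => h _ (.congPairR hw)) with ⟨hnu⟩ | ⟨_, _⟩
      · exact .base ⟨hnt, hnu⟩
      · exact absurd Step.permParPairR (h _)
    · exact absurd Step.permParPairL (h _)
  | proj b t ih =>
    rcases ih (fun u hu => h _ (.congProj hu)) with ⟨hnp⟩ | ⟨_, _⟩
    · exact .base hnp
    · exact absurd Step.permParProj (h _)
  | inl t ih =>
    rcases ih (fun u hu => h _ (.congInl hu)) with ⟨hnp⟩ | ⟨_, _⟩
    · exact .base hnp
    · exact absurd Step.permParInl (h _)
  | inr t ih =>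
    rcases ih (fun u hu => h _ (.congInr hu)) with ⟨hnp⟩ | ⟨_, _⟩
    · exact .base hnp
    · exact absurd Step.permParInr (h _)
  | case t x u y v iht ihu ihv =>
    rcases iht (fun w hw => h _ (.congCase₀ hw)) with ⟨hnt⟩ | ⟨_, _⟩
    · rcases ihu (fun w hw => h _ (.congCase₁ hw)) with ⟨hnu⟩ | ⟨_, _⟩
      · rcases ihv (fun w hw => h _ (.congCase₂ hw)) with ⟨hnv⟩ | ⟨_, _⟩
        · exact .base ⟨hnt, hnu, hnv⟩
        · exact absurd Step.permParCaseBrR (h _)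
      · exact absurd Step.permParCaseBrL (h _)
    · exact absurd Step.permParCase (h _)
  | efq t ih =>
    rcases ih (fun u hu => h _ (.congEfq hu)) with ⟨hnp⟩ | ⟨_, _⟩
    · exact .base hnp
    · exact absurd Step.permParEfq (h _)
  | chOut a t ih =>
    rcases ih (fun u hu => h _ (.congChOut hu)) with ⟨hnp⟩ | ⟨_, _⟩
    · exact .base hnp
    · exact absurd Step.permParChOut (h _)
  | par a u v ihu ihv =>
    exact .node (ihu (fun w hw => h _ (.congParL hw)))
      (ihv (fun w hw => h _ (.congParR hw)))
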